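/- arXiv:2105.14695 — 6 statements merged into one kernel-verified Lean document; each statement's English description precedes it below -/
import Mathlib

section
/- Let b_1, ..., b_n be linearly independent vectors in R^n, let L = { Σ_{i=1}^n v_i b_i : v_i ∈ Z } be the lattice they generate, and let b_1*, ..., b_n* be their Gram–Schmidt orthogonalization. Then for every real r ≥ 0, the set of lattice points x ∈ L with ‖x‖ ≤ r is finite and its cardinality is at most ∏_{i=1}^n (2r/‖b_i*‖ + 1). -/
/-!
Write a lattice point as `x = ∑ j, v j • b j`. Its component along `b i*` is
`⟪x, b i*⟫ / ‖b i*‖² = v i + ∑ j > i, v j μ j i`, which has absolute value at most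
`‖x‖ / ‖b i*‖ ≤ r / ‖b i*‖`. Hence once `v j` is fixed for all `j > i`, the integer `v i` lies in an
interval of length `2 r / ‖b i*‖` and has at most `2 r / ‖b i*‖ + 1` possible values; choosing
the coordinates from the last one down gives the product bound.
-/

instance (n : ℕ) : WellFoundedLT (Fin n) := inferInstance

open Finset InnerProductSpace RealInnerProductSpace

namespace InnerProductSpace

variable {E : Type*} [NormedAddCommGroup E] [InnerProductSpace ℝ E]
  {ι : Type*} [LinearOrder ι] [LocallyFiniteOrderBot ι] [WellFoundedLT ι]

/-- The coefficient `μ_{ij}` of the Gram–Schmidt recursion. -/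
noncomputable def gramSchmidtCoeff (f : ι → E) (i j : ι) : ℝ :=
  ⟪f i, gramSchmidt ℝ f j⟫ / ‖gramSchmidt ℝ f j‖ ^ 2

theorem inner_self_gramSchmidt (f : ι → E) (i : ι) :
    ⟪f i, gramSchmidt ℝ f i⟫ = ‖gramSchmidt ℝ f i‖ ^ 2 := by
  conv_lhs => rw [gramSchmidt_def'' ℝ f i]
  rw [inner_add_left, real_inner_self_eq_norm_sq, sum_inner, add_eq_left]
  refine sum_eq_zero fun j hj => ?_
  rw [real_inner_smul_left, gramSchmidt_orthogonal ℝ f (mem_Iio.mp hj).ne, mul_zero]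

theorem inner_sum_smul_gramSchmidt [Fintype ι] [LocallyFiniteOrderTop ι]
    (f : ι → E) (a : ι → ℝ) (i : ι) :
    ⟪∑ j, a j • f j, gramSchmidt ℝ f i⟫ =
      a i * ‖gramSchmidt ℝ f i‖ ^ 2 + ∑ j > i, a j * ⟪f j, gramSchmidt ℝ f i⟫ := by
  simp_rw [sum_inner, real_inner_smul_left, ← inner_self_gramSchmidt]
  rw [add_sum_Ioi_eq_sum_Ici (f := fun j => a j * ⟪f j, gramSchmidt ℝ f i⟫)]
  refine (sum_subset (subset_univ _) fun j _ hj => ?_).symm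
  rw [real_inner_comm, gramSchmidt_inv_triangular ℝ f (not_le.mp (by simpa using hj)), mul_zero]

theorem abs_add_sum_gramSchmidtCoeff_le [Fintype ι] [LocallyFiniteOrderTop ι]
    (f : ι → E) (a : ι → ℝ) {i : ι} (hi : gramSchmidt ℝ f i ≠ 0) :
    |a i + ∑ j > i, a j * gramSchmidtCoeff f j i| ≤ ‖∑ j, a j • f j‖ / ‖gramSchmidt ℝ f i‖ := by
  have hpos : 0 < ‖gramSchmidt ℝ f i‖ := norm_pos_iff.mpr hi
  have hcoeff : (a i + ∑ j > i, a j * gramSchmidtCoeff f j i) * ‖gramSchmidt ℝ f i‖ ^ 2 =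
      ⟪∑ j, a j • f j, gramSchmidt ℝ f i⟫ := by
    rw [inner_sum_smul_gramSchmidt, add_mul, sum_mul]
    congr 1
    refine sum_congr rfl fun j _ => ?_
    rw [gramSchmidtCoeff, mul_assoc, div_mul_cancel₀ _ (pow_pos hpos 2).ne']
  rw [le_div_iff₀ hpos, ← mul_le_mul_iff_left₀ hpos]
  calc |a i + ∑ j > i, a j * gramSchmidtCoeff f j i| * ‖gramSchmidt ℝ f i‖ * ‖gramSchmidt ℝ f i‖
      = |⟪∑ j, a j • f j, gramSchmidt ℝ f i⟫| := by
        rw [← hcoeff, abs_mul, abs_of_nonneg (sq_nonneg ‖gramSchmidt ℝ f i‖)]; ring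
    _ ≤ ‖∑ j, a j • f j‖ * ‖gramSchmidt ℝ f i‖ := abs_real_inner_le_norm _ _

end InnerProductSpace

theorem Int.exists_finset_abs_add_le (c R : ℝ) (hR : 0 ≤ R) :
    ∃ T : Finset ℤ, (∀ k : ℤ, |k + c| ≤ R → k ∈ T) ∧ (#T : ℝ) ≤ 2 * R + 1 := by
  refine ⟨Icc ⌈-c - R⌉ ⌊-c + R⌋, fun k hk => ?_, ?_⟩
  · rw [abs_le] at hk
    rw [mem_Icc, Int.ceil_le, Int.le_floor]
    constructor <;> linarith
  · have hcard : ((#(Icc ⌈-c - R⌉ ⌊-c + R⌋) : ℤ) : ℝ) = max (⌊-c + R⌋ + 1 - ⌈-c - R⌉ : ℤ) 0 := by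
      rw [Int.card_Icc, Int.toNat_eq_max]
    push_cast at hcard
    rw [hcard]
    refine max_le ?_ (by linarith)
    linarith [Int.floor_le (-c + R), Int.le_ceil (-c - R)]

theorem exists_finset_superset_of_abs_add_le : ∀ {n : ℕ} (S : Set (Fin n → ℤ))
    (c : Fin n → (Fin n → ℤ) → ℝ) (R : Fin n → ℝ), (∀ i, 0 ≤ R i) →
    (∀ i v w, (∀ j, i < j → v j = w j) → c i v = c i w) →
    (∀ v ∈ S, ∀ i, |v i + c i v| ≤ R i) →
    ∃ F : Finset (Fin n → ℤ), S ⊆ F ∧ (#F : ℝ) ≤ ∏ i, (2 * R i + 1)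
  | 0, S, _, _, _, _, _ => ⟨{0}, fun v _ => by simp [Subsingleton.elim v 0], by simp⟩
  | n + 1, S, c, R, hR, hc, hS => by
    classical
    obtain ⟨T, hT, hTcard⟩ := Int.exists_finset_abs_add_le (c (Fin.last n) 0) _ (hR (Fin.last n))
    have hslice : ∀ k : ℤ, ∃ F : Finset (Fin n → ℤ),
        {w | Fin.snoc (α := fun _ => ℤ) w k ∈ S} ⊆ F ∧
          (#F : ℝ) ≤ ∏ i : Fin n, (2 * R i.castSucc + 1) := by
      intro k
      refine exists_finset_superset_of_abs_add_le _ (fun i w => c i.castSucc (Fin.snoc w k)) _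
        (fun i => hR _) (fun i v w hvw => hc _ _ _ fun j hj => ?_)
        (fun w hw i => by simpa using hS _ hw i.castSucc)
      induction j using Fin.lastCases with
      | last => simp
      | cast j => simpa using hvw j (Fin.castSucc_lt_castSucc_iff.mp hj)
    choose F hSF hFcard using hslice
    refine ⟨T.biUnion fun k => (F k).image fun w => Fin.snoc (α := fun _ => ℤ) w k,
      fun v hv => ?_, ?_⟩
    · have hlast : v (Fin.last n) ∈ T := hT _ <| by
        rw [← hc (Fin.last n) v 0 fun j hj => absurd hj (Fin.le_last j).not_gt]
        exact hS v hv _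
      simp only [coe_biUnion, coe_image, Set.mem_iUnion, Set.mem_image]
      exact ⟨_, hlast, Fin.init v, hSF _ (by simpa using hv), Fin.snoc_init_self v⟩
    · calc (#(T.biUnion fun k => (F k).image fun w => Fin.snoc (α := fun _ => ℤ) w k) : ℝ)
          ≤ ∑ k ∈ T, (#(F k) : ℝ) := by
            exact_mod_cast card_biUnion_le.trans (sum_le_sum fun k _ => card_image_le)
        _ ≤ #T * ∏ i : Fin n, (2 * R i.castSucc + 1) := by
            simpa using sum_le_card_nsmul T _ _ fun k _ => hFcard k
        _ ≤ (2 * R (Fin.last n) + 1) * ∏ i : Fin n, (2 * R i.castSucc + 1) :=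
            mul_le_mul_of_nonneg_right hTcard (prod_nonneg fun i _ => by linarith [hR i.castSucc])
        _ = ∏ i, (2 * R i + 1) := by rw [Fin.prod_univ_castSucc, mul_comm]

/-- Let `b 1, ..., b n` be linearly independent vectors in `ℝ^n`, let
`L = { ∑ v i • b i : v ∈ ℤ^n }` be the lattice they generate, and let `gramSchmidt ℝ b`
be their Gram–Schmidt orthogonalization. Then for every real `r ≥ 0`, the set of lattice
points `x ∈ L` with `‖x‖ ≤ r` is finite and its cardinality is at most
`∏ i, (2 r / ‖bᵢ*‖ + 1)`. -/
theorem stmt_0 (n : ℕ) (b : Fin n → EuclideanSpace ℝ (Fin n))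
    (hb : LinearIndependent ℝ b)
    (L : Set (EuclideanSpace ℝ (Fin n)))
    (hL : L = {x | ∃ v : Fin n → ℤ, x = ∑ i, (v i : ℝ) • b i})
    (r : ℝ) (hr : 0 ≤ r) :
    {x ∈ L | ‖x‖ ≤ r}.Finite ∧
      (Nat.card {x ∈ L | ‖x‖ ≤ r} : ℝ) ≤
        ∏ i : Fin n, (2 * r / ‖InnerProductSpace.gramSchmidt ℝ b i‖ + 1) := by
  classical
  set φ : (Fin n → ℤ) → EuclideanSpace ℝ (Fin n) := fun v => ∑ i, (v i : ℝ) • b i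
  obtain ⟨F, hSF, hF⟩ := exists_finset_superset_of_abs_add_le {v | ‖φ v‖ ≤ r}
    (fun i v => ∑ j > i, (v j : ℝ) * gramSchmidtCoeff b j i) (fun i => r / ‖gramSchmidt ℝ b i‖)
    (fun i => by positivity)
    (fun i v w hvw => sum_congr rfl fun j hj => by rw [hvw j (mem_Ioi.mp hj)])
    (fun v hv i => (abs_add_sum_gramSchmidtCoeff_le b _ (gramSchmidt_ne_zero i hb)).trans
      (div_le_div_of_nonneg_right hv (norm_nonneg _)))
  have hsub : {x ∈ L | ‖x‖ ≤ r} ⊆ F.image φ := by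
    rintro _ ⟨hx, hxr⟩
    rw [hL] at hx
    obtain ⟨v, rfl⟩ := hx
    simpa using mem_image_of_mem φ (hSF hxr)
  refine ⟨(F.image φ).finite_toSet.subset hsub, ?_⟩
  calc (Nat.card {x ∈ L | ‖x‖ ≤ r} : ℝ) ≤ #(F.image φ) := by
        rw [Nat.card_coe_set_eq, ← Set.ncard_coe_finset]
        exact_mod_cast Set.ncard_le_ncard hsub (F.image φ).finite_toSet
    _ ≤ #F := by exact_mod_cast card_image_le
    _ ≤ ∏ i, (2 * (r / ‖gramSchmidt ℝ b i‖) + 1) := hF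
    _ = ∏ i, (2 * r / ‖gramSchmidt ℝ b i‖ + 1) := by simp_rw [mul_div_assoc]
end

section
/- Let n ≥ 1, let real numbers μ_{ij} be given for 1 ≤ j < i ≤ n, and let c_1, ..., c_n be nonnegative reals. Then the set of integer vectors v ∈ Z^n satisfying | v_j + Σ_{i=j+1}^n v_i μ_{ij} | ≤ c_j for all j = 1, ..., n is finite and has cardinality at most ∏_{j=1}^n (2 c_j + 1). -/
/-!
The first coordinate `v 0` enters only the first constraint, and the remaining constraints are a
system of the same triangular shape in the tail of `v`. Once the tail is fixed, the first
constraint confines `v 0` to a real interval of length `2 * c 0`, which contains at most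
`2 * c 0 + 1` integers. Induction on `n` gives the product bound.
-/

open Finset

theorem Int.card_Icc_ceil_floor_le {a b : ℝ} (hab : a ≤ b) :
    (#(Icc ⌈a⌉ ⌊b⌋) : ℝ) ≤ b - a + 1 := by
  rw [Int.card_Icc]
  rcases le_total (⌊b⌋ + 1 - ⌈a⌉) 0 with h | h
  · rw [Int.toNat_of_nonpos h]
    push_cast
    linarith
  · have hcast : ((⌊b⌋ + 1 - ⌈a⌉).toNat : ℝ) = ⌊b⌋ + 1 - ⌈a⌉ := by
      exact_mod_cast Int.toNat_of_nonneg h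
    rw [hcast]
    linarith [Int.floor_le b, Int.le_ceil a]

theorem abs_intCast_add_le_iff {t : ℤ} {γ c : ℝ} :
    |(t : ℝ) + γ| ≤ c ↔ t ∈ Icc ⌈-c - γ⌉ ⌊c - γ⌋ := by
  rw [abs_le, mem_Icc, Int.ceil_le, Int.le_floor]
  constructor <;> rintro ⟨h₁, h₂⟩ <;> constructor <;> linarith

def triangularBox {n : ℕ} (μ : Fin n → Fin n → ℝ) (c : Fin n → ℝ) : Set (Fin n → ℤ) :=
  {v | ∀ j, |(v j : ℝ) + ∑ i ∈ Finset.Ioi j, (v i : ℝ) * μ i j| ≤ c j}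

namespace triangularBox

section succ

variable {n : ℕ} (μ : Fin (n + 1) → Fin (n + 1) → ℝ) (c : Fin (n + 1) → ℝ)

def headShift (w : Fin n → ℤ) : ℝ := ∑ i : Fin n, (w i : ℝ) * μ i.succ 0

noncomputable def extensions (w : Fin n → ℤ) : Finset (Fin (n + 1) → ℤ) :=
  (Icc ⌈-c 0 - headShift μ w⌉ ⌊c 0 - headShift μ w⌋).image (Fin.cons · w)

theorem mem_succ_iff {v : Fin (n + 1) → ℤ} :
    v ∈ triangularBox μ c ↔
      |(v 0 : ℝ) + headShift μ (Fin.tail v)| ≤ c 0 ∧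
        Fin.tail v ∈ triangularBox (fun i j => μ i.succ j.succ) (Fin.tail c) := by
  simp only [triangularBox, headShift, Set.mem_ofPred_eq, Fin.forall_fin_succ, Fin.sum_Ioi_zero,
    Fin.sum_Ioi_succ, Fin.tail]

theorem eq_biUnion_extensions {T : Finset (Fin n → ℤ)}
    (hT : ↑T = triangularBox (fun i j => μ i.succ j.succ) (Fin.tail c)) :
    triangularBox μ c = ↑(T.biUnion (extensions μ c)) := by
  ext v
  simp only [mem_succ_iff, coe_biUnion, ← hT, extensions, Set.mem_iUnion, mem_coe, mem_image,
    ← abs_intCast_add_le_iff]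
  constructor
  · rintro ⟨h₀, htail⟩
    exact ⟨Fin.tail v, htail, v 0, h₀, Fin.cons_self_tail v⟩
  · rintro ⟨w, hw, t, ht, rfl⟩
    exact ⟨by simpa using ht, by simpa using hw⟩

theorem card_extensions_le (hc : 0 ≤ c 0) (w : Fin n → ℤ) :
    (#(extensions μ c w) : ℝ) ≤ 2 * c 0 + 1 :=
  calc (#(extensions μ c w) : ℝ)
      ≤ #(Icc ⌈-c 0 - headShift μ w⌉ ⌊c 0 - headShift μ w⌋) := mod_cast card_image_le
    _ ≤ (c 0 - headShift μ w) - (-c 0 - headShift μ w) + 1 :=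
      Int.card_Icc_ceil_floor_le (by linarith)
    _ = 2 * c 0 + 1 := by ring

end succ

theorem exists_finset_eq_card_le :
    ∀ {n : ℕ} (μ : Fin n → Fin n → ℝ) (c : Fin n → ℝ), (∀ j, 0 ≤ c j) →
      ∃ T : Finset (Fin n → ℤ), ↑T = triangularBox μ c ∧ (#T : ℝ) ≤ ∏ j, (2 * c j + 1)
  | 0, _, _, _ => ⟨univ, coe_univ.trans (Set.eq_univ_of_forall fun _ j => j.elim0).symm, by simp⟩
  | n + 1, μ, c, hc => by
    obtain ⟨T, hT, hcard⟩ :=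
      exists_finset_eq_card_le (fun i j => μ i.succ j.succ) (Fin.tail c) fun j => hc j.succ
    refine ⟨T.biUnion (extensions μ c), (eq_biUnion_extensions μ c hT).symm, ?_⟩
    calc (#(T.biUnion (extensions μ c)) : ℝ)
        ≤ ∑ w ∈ T, (#(extensions μ c w) : ℝ) := mod_cast card_biUnion_le
      _ ≤ #T • (2 * c 0 + 1) := sum_le_card_nsmul _ _ _ fun w _ => card_extensions_le μ c (hc 0) w
      _ ≤ (∏ j, (2 * Fin.tail c j + 1)) * (2 * c 0 + 1) := by
        rw [nsmul_eq_mul]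
        gcongr
        linarith [hc 0]
      _ = ∏ j, (2 * c j + 1) := by rw [Fin.prod_univ_succ, mul_comm]; rfl

end triangularBox

theorem stmt_4_general (n : ℕ) (μ : Fin n → Fin n → ℝ) (c : Fin n → ℝ)
    (hc : ∀ j, 0 ≤ c j) :
    {v : Fin n → ℤ |
        ∀ j : Fin n, |(v j : ℝ) + ∑ i ∈ Finset.Ioi j, (v i : ℝ) * μ i j| ≤ c j}.Finite ∧
      (Nat.card {v : Fin n → ℤ |
          ∀ j : Fin n, |(v j : ℝ) + ∑ i ∈ Finset.Ioi j, (v i : ℝ) * μ i j| ≤ c j} : ℝ) ≤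
        ∏ j : Fin n, (2 * c j + 1) := by
  obtain ⟨T, hT, hcard⟩ := triangularBox.exists_finset_eq_card_le μ c hc
  change (triangularBox μ c).Finite ∧ (Nat.card (triangularBox μ c) : ℝ) ≤ _
  rw [← hT, Nat.card_coe_set_eq, Set.ncard_coe_finset]
  exact ⟨T.finite_toSet, hcard⟩

/-- Let `n ≥ 1`, let real numbers `μ i j` be given for `j < i`, and let
`c 1, ..., c n` be nonnegative reals. Then the set of integer vectors `v ∈ ℤ^n` satisfying
`|v j + ∑_{i > j} v i * μ i j| ≤ c j` for all `j` is finite and has cardinality at most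
`∏ j, (2 * c j + 1)`. -/
theorem stmt_4 (n : ℕ) (hn : 1 ≤ n) (μ : Fin n → Fin n → ℝ) (c : Fin n → ℝ)
    (hc : ∀ j, 0 ≤ c j) :
    {v : Fin n → ℤ |
        ∀ j : Fin n, |(v j : ℝ) + ∑ i ∈ Finset.Ioi j, (v i : ℝ) * μ i j| ≤ c j}.Finite ∧
      (Nat.card {v : Fin n → ℤ |
          ∀ j : Fin n, |(v j : ℝ) + ∑ i ∈ Finset.Ioi j, (v i : ℝ) * μ i j| ≤ c j} : ℝ) ≤
        ∏ j : Fin n, (2 * c j + 1) :=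
  stmt_4_general n μ c hc
end

section
/- Let b_1, ..., b_n be linearly independent vectors in R^n with Gram–Schmidt orthogonalization b_1*, ..., b_n*, coefficients μ_{ij}, and B_i = ‖b_i*‖². Fix 2 ≤ k ≤ n and let c_1, ..., c_n be the basis obtained from b_1, ..., b_n by exchanging b_{k−1} and b_k. Then the (k−1)-th Gram–Schmidt vector of the new basis is c_{k−1}* = b_k* + μ_{k,k−1} b_{k−1}*, and hence ‖c_{k−1}*‖² = B_k + μ_{k,k−1}² B_{k−1}. -/
open Finset InnerProductSpace

namespace InnerProductSpace

variable (𝕜 : Type*) {E : Type*} [RCLike 𝕜] [NormedAddCommGroup E] [InnerProductSpace 𝕜 E]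
variable {ι : Type*} [LinearOrder ι] [LocallyFiniteOrderBot ι] [WellFoundedLT ι]

theorem gramSchmidt_congr_of_forall_le {f g : ι → E} (j : ι) (h : ∀ i ≤ j, f i = g i) :
    gramSchmidt 𝕜 f j = gramSchmidt 𝕜 g j := by
  induction j using WellFoundedLT.induction with
  | ind j ih =>
    rw [gramSchmidt_def, gramSchmidt_def, h j le_rfl]
    refine congrArg _ (Finset.sum_congr rfl fun i hi => ?_)
    have hij : i < j := mem_Iio.1 hi
    rw [ih i hij fun l hl => h l (hl.trans hij.le)]

theorem gramSchmidt_comp_swap_of_covBy [DecidableEq ι] (f : ι → E) {a b : ι} (hab : a ⋖ b) :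
    gramSchmidt 𝕜 (f ∘ Equiv.swap a b) a =
      gramSchmidt 𝕜 f b +
        (inner 𝕜 (gramSchmidt 𝕜 f a) (f b) / (‖gramSchmidt 𝕜 f a‖ : 𝕜) ^ 2) •
          gramSchmidt 𝕜 f a := by
  have hIio : Iio b = insert a (Iio a) := by
    ext i
    rw [mem_Iio, mem_insert, mem_Iio, covBy_iff_lt_iff_le_left.1 hab, le_iff_eq_or_lt]
  have hbelow : ∀ i ∈ Iio a, gramSchmidt 𝕜 (f ∘ Equiv.swap a b) i = gramSchmidt 𝕜 f i :=
    fun i hi => gramSchmidt_congr_of_forall_le 𝕜 i fun l hl => by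
      have hla : l < a := hl.trans_lt (mem_Iio.1 hi)
      simp [Equiv.swap_apply_of_ne_of_ne hla.ne (hla.trans hab.lt).ne]
  have hfb := gramSchmidt_def' 𝕜 f b
  rw [hIio, sum_insert notMem_Iio_self, Submodule.starProjection_singleton, RCLike.ofReal_pow] at hfb
  rw [gramSchmidt_def, Function.comp_apply, Equiv.swap_apply_left,
    sum_congr rfl fun i hi => by rw [hbelow i hi]]
  nth_rewrite 1 [hfb]
  abel

end InnerProductSpace

theorem stmt_7_general (n : ℕ) (b : Fin n → EuclideanSpace ℝ (Fin n))
    (μ : Fin n → Fin n → ℝ)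
    (hμ : ∀ i j : Fin n,
      μ i j = (inner ℝ (b i) (InnerProductSpace.gramSchmidt ℝ b j) : ℝ) / ‖InnerProductSpace.gramSchmidt ℝ b j‖ ^ 2)
    (B : Fin n → ℝ) (hB : ∀ i, B i = ‖InnerProductSpace.gramSchmidt ℝ b i‖ ^ 2)
    (k' k : Fin n) (hk : (k' : ℕ) + 1 = (k : ℕ))
    (c : Fin n → EuclideanSpace ℝ (Fin n)) (hc : c = b ∘ Equiv.swap k' k) :
    InnerProductSpace.gramSchmidt ℝ c k' = InnerProductSpace.gramSchmidt ℝ b k + μ k k' • InnerProductSpace.gramSchmidt ℝ b k' ∧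
      ‖InnerProductSpace.gramSchmidt ℝ c k'‖ ^ 2 = B k + μ k k' ^ 2 * B k' := by
  have hcov : k' ⋖ k := Fin.covBy_iff.2 (Nat.covBy_iff_add_one_eq.2 hk)
  have hc' : gramSchmidt ℝ c k' = gramSchmidt ℝ b k + μ k k' • gramSchmidt ℝ b k' := by
    rw [hc, gramSchmidt_comp_swap_of_covBy ℝ b hcov, hμ, real_inner_comm, RCLike.ofReal_real_eq_id, id]
  have horth : inner ℝ (gramSchmidt ℝ b k) (μ k k' • gramSchmidt ℝ b k') = 0 := by
    rw [real_inner_smul_right, gramSchmidt_orthogonal ℝ b hcov.lt.ne', mul_zero]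
  refine ⟨hc', ?_⟩
  rw [hc', norm_add_sq_real, horth, mul_zero, add_zero, norm_smul, mul_pow, Real.norm_eq_abs,
    sq_abs, hB, hB]

/-- Let `b 1, ..., b n` be linearly independent vectors in `ℝ^n` with
Gram–Schmidt orthogonalization `b*`, coefficients `μ`, and `B i = ‖bᵢ*‖²`. Let `k' , k`
be consecutive indices (`k' + 1 = k`, the paper's `k−1` and `k`) and let `c` be the basis
obtained from `b` by exchanging `b k'` and `b k`. Then the `k'`-th Gram–Schmidt vector of
the new basis is `c k' * = b k * + μ k k' • b k' *`, and hence
`‖c k' *‖² = B k + μ k k' ² * B k'`. -/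
theorem stmt_7 (n : ℕ) (b : Fin n → EuclideanSpace ℝ (Fin n))
    (hb : LinearIndependent ℝ b) (μ : Fin n → Fin n → ℝ)
    (hμ : ∀ i j : Fin n,
      μ i j = (inner ℝ (b i) (InnerProductSpace.gramSchmidt ℝ b j) : ℝ) / ‖InnerProductSpace.gramSchmidt ℝ b j‖ ^ 2)
    (B : Fin n → ℝ) (hB : ∀ i, B i = ‖InnerProductSpace.gramSchmidt ℝ b i‖ ^ 2)
    (k' k : Fin n) (hk : (k' : ℕ) + 1 = (k : ℕ))
    (c : Fin n → EuclideanSpace ℝ (Fin n)) (hc : c = b ∘ Equiv.swap k' k) :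
    InnerProductSpace.gramSchmidt ℝ c k' = InnerProductSpace.gramSchmidt ℝ b k + μ k k' • InnerProductSpace.gramSchmidt ℝ b k' ∧
      ‖InnerProductSpace.gramSchmidt ℝ c k'‖ ^ 2 = B k + μ k k' ^ 2 * B k' :=
  stmt_7_general n b μ hμ B hB k' k hk c hc
end

section
/- Let b_1, ..., b_n be linearly independent vectors in R^n with B_i = ‖b_i*‖², let π_j be the orthogonal projection onto the orthogonal complement of span{b_1, ..., b_{j−1}}, and define Pot(B) = ∏_{i=1}^n B_i^{n−i+1}. Then for all 1 ≤ i < k ≤ n, Pot(σ_{i,k}(B)) = Pot(B) · ∏_{j=i}^{k−1} ‖π_j(b_k)‖² / B_j, where σ_{i,k}(B) = (b_1, ..., b_{i−1}, b_k, b_i, ..., b_{k−1}, b_{k+1}, ..., b_n). -/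
open Finset InnerProductSpace Matrix

section Gram
variable {E : Type*} [NormedAddCommGroup E] [InnerProductSpace ℝ E]

theorem Matrix.gram_sum_smul {m n : Type*} [Fintype n] (L : Matrix m n ℝ) (v : n → E) :
    gram ℝ (fun i => ∑ j, L i j • v j) = L * gram ℝ v * Lᵀ := by
  ext i j
  simp only [gram_apply, sum_inner, inner_sum, real_inner_smul_left, real_inner_smul_right,
    mul_apply, transpose_apply, Finset.sum_mul]
  exact Finset.sum_congr rfl fun p _ => Finset.sum_congr rfl fun q _ => by ring

theorem Matrix.gram_eq_diagonal_of_pairwise_orthogonal {n : Type*} [DecidableEq n] {v : n → E}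
    (hv : Pairwise fun i j => ⟪v i, v j⟫_ℝ = 0) :
    gram ℝ v = diagonal fun i => ‖v i‖ ^ 2 := by
  ext i j
  rcases eq_or_ne i j with rfl | hij
  · simp
  · simp [hv hij, hij]

theorem Matrix.det_gram_restrict_comp {α β : Type*} [DecidableEq α] [DecidableEq β] (f : β → E)
    {σ : α → β} {s : Finset α} (hσ : Set.InjOn σ s) :
    (gram ℝ (s.restrict (f ∘ σ))).det = (gram ℝ ((s.image σ).restrict f)).det := by
  let e : s ≃ s.image σ := Equiv.ofBijective (fun i => ⟨σ i, mem_image_of_mem σ i.2⟩)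
    ⟨fun i j h => Subtype.ext (hσ i.2 j.2 (congrArg Subtype.val h)), fun ⟨x, hx⟩ => by
      obtain ⟨i, hi, rfl⟩ := mem_image.1 hx
      exact ⟨⟨i, hi⟩, rfl⟩⟩
  exact det_submatrix_equiv_self e (gram ℝ ((s.image σ).restrict f))

end Gram

theorem Finset.prod_pow_card_Ici {ι M : Type*} [CommMonoid M] [Fintype ι] [Preorder ι]
    [LocallyFiniteOrderTop ι] [LocallyFiniteOrderBot ι] (a : ι → M) :
    ∏ i, a i ^ #(Ici i) = ∏ m, ∏ i ∈ Iic m, a i := by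
  rw [prod_comm' (t' := univ) (s' := Ici) fun m i => by simp]
  exact prod_congr rfl fun i _ => (prod_const _).symm

namespace InnerProductSpace

variable {ι E : Type*} [LinearOrder ι] [LocallyFiniteOrderBot ι] [WellFoundedLT ι]
  [NormedAddCommGroup E] [InnerProductSpace ℝ E]

theorem gramSchmidt_congr {f g : ι → E} {i : ι} (h : ∀ j ≤ i, f j = g j) :
    gramSchmidt ℝ f i = gramSchmidt ℝ g i := by
  induction i using WellFoundedLT.induction with
  | ind i ih =>
    rw [gramSchmidt_def, gramSchmidt_def, h i le_rfl]
    congr 1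
    refine Finset.sum_congr rfl fun j hj => ?_
    rw [ih j (mem_Iio.1 hj) fun l hl => h l (hl.trans (mem_Iio.1 hj).le)]

theorem gramSchmidt_mem_orthogonal_span_Iio (f : ι → E) (i : ι) :
    gramSchmidt ℝ f i ∈ (Submodule.span ℝ (f '' Set.Iio i))ᗮ := by
  rw [← Submodule.span_singleton_le_iff_mem, ← Submodule.isOrtho_iff_le, Submodule.isOrtho_span]
  rintro u rfl _ ⟨j, hj, rfl⟩
  exact gramSchmidt_inv_triangular ℝ f hj

theorem sub_gramSchmidt_mem_span_Iio (f : ι → E) (i : ι) :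
    f i - gramSchmidt ℝ f i ∈ Submodule.span ℝ (f '' Set.Iio i) := by
  rw [← span_gramSchmidt_Iio ℝ f i, sub_eq_iff_eq_add'.2 (gramSchmidt_def' ℝ f i)]
  refine Submodule.sum_mem _ fun j hj => ?_
  have : gramSchmidt ℝ f j ∈ Submodule.span ℝ (gramSchmidt ℝ f '' Set.Iio i) :=
    Submodule.subset_span ⟨j, mem_Iio.1 hj, rfl⟩
  exact (Submodule.span_singleton_le_iff_mem _ _).2 this (Submodule.coe_mem _)

theorem gramSchmidt_eq_orthogonalProjectionOnto [CompleteSpace E] (f : ι → E) (i : ι) :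
    gramSchmidt ℝ f i =
      (Submodule.orthogonalProjectionOnto (Submodule.span ℝ (f '' Set.Iio i))ᗮ (f i) : E) := by
  rw [Submodule.coe_orthogonalProjectionOnto_apply]
  exact (Submodule.eq_starProjection_of_mem_orthogonal (gramSchmidt_mem_orthogonal_span_Iio f i)
    (Submodule.le_orthogonal_orthogonal _ (sub_gramSchmidt_mem_span_Iio f i))).symm

theorem det_gram_restrict_eq_prod_gramSchmidt (f : ι → E) {s : Finset ι}
    (hs : IsLowerSet (s : Set ι)) :
    (gram ℝ (s.restrict f)).det = ∏ i ∈ s, ‖gramSchmidt ℝ f i‖ ^ 2 := by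
  set g := gramSchmidt ℝ f
  -- `f i = ∑ j ≤ i, coeff i j • g j` by `gramSchmidt_def''`, so `gram f = L * diag ‖g‖² * Lᵀ`
  -- with `L` unitriangular
  let coeff (i j : ι) : ℝ := if j = i then 1 else if j < i then ⟪g j, f i⟫_ℝ / ‖g j‖ ^ 2 else 0
  let L : Matrix s s ℝ := of fun i j => coeff i j
  have hf : s.restrict f = fun i => ∑ j, L i j • s.restrict g j := by
    funext i
    have hIic : Iic (i : ι) ⊆ s := fun j hj => hs (mem_Iic.1 hj) i.2
    change f i = ∑ j : s, coeff i j • g j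
    rw [Finset.sum_coe_sort s fun j => coeff i j • g j, ← sum_subset hIic fun j _ hj => ?_,
      ← Iio_insert, sum_insert notMem_Iio_self]
    · simp only [coeff, if_true, one_smul]
      conv_lhs => rw [gramSchmidt_def'' ℝ f i]
      refine congrArg (g i + ·) (sum_congr rfl fun j hj => ?_)
      rw [mem_Iio] at hj
      simp [g, hj.ne, hj]
    · have hij : (i : ι) < j := not_le.1 (mt mem_Iic.2 hj)
      simp [coeff, hij.ne', not_lt.2 hij.le]
  have hL : L.det = 1 := by
    rw [det_of_isLowerTriangular L fun i j (hij : i < j) => ?_]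
    · exact prod_eq_one fun i _ => by simp [L, coeff]
    · simp [L, coeff, hij.ne', not_lt.2 hij.le]
  rw [hf, gram_sum_smul, gram_eq_diagonal_of_pairwise_orthogonal, det_mul, det_mul, det_transpose,
    hL, det_diagonal, one_mul, mul_one]
  · exact prod_coe_sort s fun i => ‖g i‖ ^ 2
  · exact fun i j hij => gramSchmidt_orthogonal ℝ f (Subtype.coe_ne_coe.2 hij)

theorem det_gram_restrict_insert_Iio [CompleteSpace E] (f : ι → E) {m k : ι} (hmk : m < k) :
    (gram ℝ ((insert k (Iio m)).restrict f)).det =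
      (∏ i ∈ Iio m, ‖gramSchmidt ℝ f i‖ ^ 2) *
        ‖(Submodule.orthogonalProjectionOnto (Submodule.span ℝ (f '' Set.Iio m))ᗮ (f k) : E)‖
          ^ 2 := by
  -- move `f k` to position `m`, where Gram–Schmidt projects it exactly as required
  set τ : ι → ι := Function.update id m k
  have hτ_lt : ∀ i < m, τ i = i := fun i hi => Function.update_of_ne hi.ne _ _
  have hτ_m : τ m = k := Function.update_self m k id
  have hτ_Iio : τ '' Set.Iio m = Set.Iio m :=
    (Set.image_congr fun i hi => hτ_lt i hi).trans (Set.image_id _)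
  have hτ : Set.InjOn τ (Iic m) := by
    intro i hi j hj hij
    simp only [coe_Iic, Set.mem_Iic] at hi hj
    rcases hi.lt_or_eq with hi | rfl <;> rcases hj.lt_or_eq with hj | rfl
    · rwa [hτ_lt i hi, hτ_lt j hj] at hij
    · rw [hτ_lt i hi, hτ_m] at hij
      exact absurd (hij ▸ hi) (not_lt.2 hmk.le)
    · rw [hτ_lt j hj, hτ_m] at hij
      exact absurd (hij ▸ hj) (not_lt.2 hmk.le)
    · rfl
  have himage : (Iic m).image τ = insert k (Iio m) := by
    rw [← Iio_insert, image_insert, hτ_m, image_congr fun i hi => hτ_lt i (mem_Iio.1 hi),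
      image_id']
  have hIic : IsLowerSet ((Iic m : Finset ι) : Set ι) := by simpa using isLowerSet_Iic m
  rw [← himage, ← det_gram_restrict_comp f hτ, det_gram_restrict_eq_prod_gramSchmidt _ hIic,
    ← Iio_insert, prod_insert notMem_Iio_self, mul_comm]
  congr 1
  · refine prod_congr rfl fun i hi => ?_
    rw [gramSchmidt_congr (f := f ∘ τ) (g := f) fun j hj =>
      congrArg f (hτ_lt j (hj.trans_lt (mem_Iio.1 hi)))]
  · rw [gramSchmidt_eq_orthogonalProjectionOnto, Set.image_comp, hτ_Iio, Function.comp_apply, hτ_m]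

end InnerProductSpace

section DeepInsertion
variable {n : ℕ} (ρ k : Fin n)

/-- `b ∘ deepInsertion ρ k` is `σ_{ρ,k}(b)`: `b k` is inserted at position `ρ`. -/
def deepInsertion (i : Fin n) : Fin n :=
  if i = ρ then k
  else if ρ < i ∧ i ≤ k then ⟨(i : ℕ) - 1, lt_of_le_of_lt (Nat.sub_le _ _) i.isLt⟩
  else i

theorem val_deepInsertion (i : Fin n) : (deepInsertion ρ k i : ℕ) =
    if (i : ℕ) = ρ then (k : ℕ) else if (ρ : ℕ) < i ∧ (i : ℕ) ≤ k then (i : ℕ) - 1 else i := by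
  simp only [deepInsertion, Fin.ext_iff, Fin.lt_def, Fin.le_def]
  split_ifs <;> rfl

variable {ρ k}

theorem deepInsertion_injective (h : ρ ≤ k) : Function.Injective (deepInsertion ρ k) := by
  intro i j hij
  rw [Fin.ext_iff, val_deepInsertion, val_deepInsertion] at hij
  rw [Fin.le_def] at h
  ext
  split_ifs at hij <;> omega

theorem image_deepInsertion_Iic_of_notMem (h : ρ ≤ k) {m : Fin n} (hm : m ∉ Ico ρ k) :
    (Iic m).image (deepInsertion ρ k) = Iic m := by
  refine eq_of_subset_of_card_le (fun x hx => ?_)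
    (card_image_of_injective _ (deepInsertion_injective h)).ge
  obtain ⟨i, hi, rfl⟩ := mem_image.1 hx
  simp only [mem_Ico, mem_Iic, Fin.le_def, Fin.lt_def, val_deepInsertion] at hi hm h ⊢
  split_ifs <;> omega

theorem image_deepInsertion_Iic_of_mem (h : ρ ≤ k) {m : Fin n} (hm : m ∈ Ico ρ k) :
    (Iic m).image (deepInsertion ρ k) = insert k (Iio m) := by
  have hkm : k ∉ Iio m := by simpa using (mem_Ico.1 hm).2.le
  refine eq_of_subset_of_card_le (fun x hx => ?_) ?_
  · obtain ⟨i, hi, rfl⟩ := mem_image.1 hx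
    simp only [mem_Ico, mem_insert, mem_Iio, mem_Iic, Fin.ext_iff, Fin.le_def, Fin.lt_def,
      val_deepInsertion] at hi hm h ⊢
    split_ifs <;> omega
  · rw [card_image_of_injective _ (deepInsertion_injective h), card_insert_of_notMem hkm,
      ← Iio_insert, card_insert_of_notMem notMem_Iio_self]

end DeepInsertion

theorem prod_Iic_gramSchmidt_comp_deepInsertion {E : Type*} [NormedAddCommGroup E]
    [InnerProductSpace ℝ E] [CompleteSpace E] {n : ℕ} {b : Fin n → E}
    (hb : LinearIndependent ℝ b) {ρ k : Fin n} (h : ρ ≤ k) (m : Fin n) :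
    ∏ i ∈ Iic m, ‖gramSchmidt ℝ (b ∘ deepInsertion ρ k) i‖ ^ 2 =
      (∏ i ∈ Iic m, ‖gramSchmidt ℝ b i‖ ^ 2) *
        if m ∈ Ico ρ k then
          ‖(Submodule.orthogonalProjectionOnto (Submodule.span ℝ (b '' Set.Iio m))ᗮ (b k) : E)‖ ^ 2
            / ‖gramSchmidt ℝ b m‖ ^ 2
        else 1 := by
  have hIic : IsLowerSet ((Iic m : Finset (Fin n)) : Set (Fin n)) := by
    simpa using isLowerSet_Iic m
  rw [← det_gram_restrict_eq_prod_gramSchmidt _ hIic,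
    det_gram_restrict_comp b (deepInsertion_injective h).injOn]
  split_ifs with hm
  · have hbm : ‖gramSchmidt ℝ b m‖ ≠ 0 := norm_ne_zero_iff.2 (gramSchmidt_ne_zero m hb)
    rw [image_deepInsertion_Iic_of_mem h hm, det_gram_restrict_insert_Iio b (mem_Ico.1 hm).2,
      ← Iio_insert, prod_insert notMem_Iio_self]
    field_simp
  · rw [image_deepInsertion_Iic_of_notMem h hm, det_gram_restrict_eq_prod_gramSchmidt b hIic,
      mul_one]

/-- Let `b 1, ..., b n` be linearly independent vectors in `ℝ^n` with
`B i = ‖bᵢ*‖²`, let `π j` be the orthogonal projection onto the orthogonal complement of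
`span {b t : t < j}`, and define `Pot(f) = ∏ i, ‖fᵢ*‖² ^ (n − i + 1)` (with `0`-indexed
exponent `n − i`). Then for `ρ < k`, with `c = σ_{ρ,k}(b)` the deep-insertion permutation
(`c ρ = b k`, `c i = b (i−1)` for `ρ < i ≤ k`, `c i = b i` otherwise),
`Pot(c) = Pot(b) * ∏_{j ∈ [ρ, k)} ‖π j (b k)‖² / B j`. -/
theorem stmt_12 (n : ℕ) (b : Fin n → EuclideanSpace ℝ (Fin n))
    (hb : LinearIndependent ℝ b)
    (B : Fin n → ℝ) (hB : ∀ i, B i = ‖InnerProductSpace.gramSchmidt ℝ b i‖ ^ 2)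
    (ρ k : Fin n) (hρk : ρ < k)
    (c : Fin n → EuclideanSpace ℝ (Fin n))
    (hc : ∀ i : Fin n, c i =
      if i = ρ then b k
      else if ρ < i ∧ i ≤ k then b ⟨(i : ℕ) - 1, lt_of_le_of_lt (Nat.sub_le _ _) i.isLt⟩
      else b i)
    (Pot : (Fin n → EuclideanSpace ℝ (Fin n)) → ℝ)
    (hPot : ∀ f, Pot f = ∏ i : Fin n, (‖InnerProductSpace.gramSchmidt ℝ f i‖ ^ 2) ^ (n - (i : ℕ))) :
    Pot c = Pot b *
      ∏ j ∈ Finset.Ico ρ k,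
        ‖(Submodule.orthogonalProjectionOnto (Submodule.span ℝ (b '' Set.Iio j))ᗮ (b k) :
            EuclideanSpace ℝ (Fin n))‖ ^ 2 / B j := by
  have hc' : c = b ∘ deepInsertion ρ k := by
    funext i
    rw [hc, Function.comp_apply, deepInsertion]
    split_ifs <;> rfl
  simp only [hPot, hB, hc', ← Fin.card_Ici, prod_pow_card_Ici,
    prod_Iic_gramSchmidt_comp_deepInsertion hb hρk.le, prod_mul_distrib, prod_ite_mem, univ_inter]
end

section
/- Let n ≥ 2 and α ≥ 1 be real. Define w_1 = 3^n α − 2 and, for 2 ≤ k ≤ n−1, w_k = ( 3 (1 + √(k+3)) ∏_{j=2}^{k−1} (2 + √(j+3)) )^n α^k − 2. Then for every 1 ≤ m ≤ n−1, Σ_{i=1}^m w_i ≤ ( 3 ∏_{j=2}^{m} (2 + √(j+3)) )^n α^m − 2 (with the empty product equal to 1). -/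
/-! Induction on `m`. With `P = ∏_{j=2}^{m} (2 + √(j+3))` and `s = √(m+4)`, the inductive step
reduces to `(3P)^n α^m + (3P)^n (1+s)^n α^{m+1} ≤ (3P)^n (2+s)^n α^{m+1}`, which follows from
`α^m ≤ α^{m+1}` and `1 + (1+s)^n ≤ (2+s)^n`; the two constants `-2` only add slack. -/

lemma pow_mul_add_mul_pow_mul_le {R : Type*} [CommSemiring R] [PartialOrder R] [IsOrderedRing R]
    {n : ℕ} (hn : n ≠ 0) {a b x y : R} (ha : 0 ≤ a) (hb : 0 ≤ b) (hxy : x ≤ y) (hy : 0 ≤ y) :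
    b ^ n * x + (a * b) ^ n * y ≤ ((a + 1) * b) ^ n * y :=
  calc b ^ n * x + (a * b) ^ n * y ≤ b ^ n * y + (a * b) ^ n * y := by gcongr
    _ = (a ^ n + 1 ^ n) * b ^ n * y := by ring
    _ ≤ (a + 1) ^ n * b ^ n * y := by gcongr; exact pow_add_pow_le ha zero_le_one hn
    _ = ((a + 1) * b) ^ n * y := by rw [mul_pow]

theorem stmt_15_general (n : ℕ) (α : ℝ) (hα : 1 ≤ α) (w : ℕ → ℝ)
    (hw1 : w 1 = 3 ^ n * α - 2)
    (hwk : ∀ k : ℕ, 2 ≤ k → k ≤ n - 1 →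
      w k = (3 * (1 + Real.sqrt ((k : ℝ) + 3)) *
          ∏ j ∈ Finset.Icc 2 (k - 1), (2 + Real.sqrt ((j : ℝ) + 3))) ^ n * α ^ k - 2) :
    ∀ m : ℕ, 1 ≤ m → m ≤ n - 1 →
      ∑ i ∈ Finset.Icc 1 m, w i ≤
        (3 * ∏ j ∈ Finset.Icc 2 m, (2 + Real.sqrt ((j : ℝ) + 3))) ^ n * α ^ m - 2 := by
  intro m hm
  induction m, hm using Nat.le_induction with
  | base => intro _; simp [hw1]
  | succ m hm ih =>
    intro hmn
    set P := ∏ j ∈ Finset.Icc 2 m, (2 + Real.sqrt ((j : ℝ) + 3))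
    set s := Real.sqrt (((m + 1 : ℕ) : ℝ) + 3)
    have step := pow_mul_add_mul_pow_mul_le (n := n) (by omega) (a := 1 + s) (b := 3 * P)
      (by positivity) (by positivity) (pow_le_pow_right₀ hα (m.le_add_right 1)) (by positivity)
    rw [Finset.sum_Icc_succ_top (by omega), Finset.prod_Icc_succ_top (by omega),
      hwk (m + 1) (by omega) hmn, Nat.add_sub_cancel]
    have hprev : 3 * (1 + s) * P = (1 + s) * (3 * P) := by ring
    have hnext : 3 * (P * (2 + s)) = (1 + s + 1) * (3 * P) := by ring
    rw [hprev, hnext]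
    linarith [ih (by omega)]

/-- Let `n ≥ 2` and `α ≥ 1` be real. Define `w 1 = 3^n * α − 2` and,
for `2 ≤ k ≤ n−1`,
`w k = (3 * (1 + √(k+3)) * ∏_{j ∈ [2, k−1]} (2 + √(j+3)))^n * α^k − 2`.
Then for every `1 ≤ m ≤ n−1`,
`∑_{i ∈ [1, m]} w i ≤ (3 * ∏_{j ∈ [2, m]} (2 + √(j+3)))^n * α^m − 2`
(empty products being `1`). -/
theorem stmt_15 (n : ℕ) (hn : 2 ≤ n) (α : ℝ) (hα : 1 ≤ α) (w : ℕ → ℝ)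
    (hw1 : w 1 = 3 ^ n * α - 2)
    (hwk : ∀ k : ℕ, 2 ≤ k → k ≤ n - 1 →
      w k = (3 * (1 + Real.sqrt ((k : ℝ) + 3)) *
          ∏ j ∈ Finset.Icc 2 (k - 1), (2 + Real.sqrt ((j : ℝ) + 3))) ^ n * α ^ k - 2) :
    ∀ m : ℕ, 1 ≤ m → m ≤ n - 1 →
      ∑ i ∈ Finset.Icc 1 m, w i ≤
        (3 * ∏ j ∈ Finset.Icc 2 m, (2 + Real.sqrt ((j : ℝ) + 3))) ^ n * α ^ m - 2 :=
  stmt_15_general n α hα w hw1 hwk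
end

section
/- Let B be the 3×3 integer matrix with columns b_1 = (0, 3, −2), b_2 = (−3, −2, 0), b_3 = (2, −2, −2), and let σ_{1,3}(B) be the basis (b_3, b_1, b_2). Then Pot(B) = 2,496,676 and Pot(σ_{1,3}(B)) = 2,633,856; in particular Pot(σ_{1,3}(B)) > Pot(B), so Pot is not monotonically decreasing under the deep insertion performed by 1-DeepLLL on this input. -/
/-- The potential `Pot(B) = ∏_{i=1}^{3} B_i^{3−i+1} = B₁³ B₂² B₃` of a triple of vectors
in `ℝ³`, where `B_i = ‖bᵢ*‖²` are the squared norms of the Gram–Schmidt vectors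
(`0`-indexed exponent `3 − i`). -/
noncomputable def Pot3 (f : Fin 3 → EuclideanSpace ℝ (Fin 3)) : ℝ :=
  ∏ i : Fin 3, (‖InnerProductSpace.gramSchmidt ℝ f i‖ ^ 2) ^ (3 - (i : ℕ))

open InnerProductSpace Finset

section GramSchmidt

variable {𝕜 E : Type*} [RCLike 𝕜] [NormedAddCommGroup E] [InnerProductSpace 𝕜 E]

local notation "⟪" x ", " y "⟫" => inner 𝕜 x y

theorem gramSchmidt_fin_zero {n : ℕ} (f : Fin (n + 1) → E) : gramSchmidt 𝕜 f 0 = f 0 :=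
  gramSchmidt_bot 𝕜 f

theorem gramSchmidt_one {n : ℕ} (f : Fin (n + 2) → E) :
    gramSchmidt 𝕜 f 1 = f 1 - (⟪f 0, f 1⟫ / (‖f 0‖ : 𝕜) ^ 2) • f 0 := by
  have hIio : Iio (1 : Fin (n + 2)) = {0} := by ext i; simp [Fin.lt_one_iff]
  have h := gramSchmidt_def'' 𝕜 f 1
  rw [hIio, sum_singleton, gramSchmidt_fin_zero] at h
  exact eq_sub_of_add_eq h.symm

theorem gramSchmidt_two {n : ℕ} (f : Fin (n + 3) → E) :
    gramSchmidt 𝕜 f 2 = f 2 - (⟪f 0, f 2⟫ / (‖f 0‖ : 𝕜) ^ 2) • f 0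
      - (⟪gramSchmidt 𝕜 f 1, f 2⟫ / (‖gramSchmidt 𝕜 f 1‖ : 𝕜) ^ 2) • gramSchmidt 𝕜 f 1 := by
  have hIio : Iio (2 : Fin (n + 3)) = {0, 1} := by
    ext ⟨i, hi⟩; simp [Fin.lt_def, Fin.ext_iff, Nat.mod_eq_of_lt (show 2 < n + 3 by omega)]; omega
  have h := gramSchmidt_def'' 𝕜 f 2
  rw [hIio, sum_pair (by simp), gramSchmidt_fin_zero] at h
  rw [sub_sub, eq_sub_iff_add_eq, ← h]

end GramSchmidt

theorem real_inner_toLp_three (x y z x' y' z' : ℝ) :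
    inner ℝ !₂[x, y, z] !₂[x', y', z'] = x * x' + y * y' + z * z' := by
  simp [EuclideanSpace.inner_toLp_toLp, Fin.sum_univ_three, dotProduct]
  ring

theorem norm_sq_toLp_three (x y z : ℝ) : ‖!₂[x, y, z]‖ ^ 2 = x ^ 2 + y ^ 2 + z ^ 2 := by
  simp [EuclideanSpace.real_norm_sq_eq, Fin.sum_univ_three]

theorem toLp_three_sub_smul (x y z x' y' z' c : ℝ) :
    !₂[x, y, z] - c • !₂[x', y', z'] = !₂[x - c * x', y - c * y', z - c * z'] := by
  simp [← WithLp.toLp_smul, ← WithLp.toLp_sub]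

theorem Pot3_eq (f : Fin 3 → EuclideanSpace ℝ (Fin 3)) :
    Pot3 f = (‖gramSchmidt ℝ f 0‖ ^ 2) ^ 3 * (‖gramSchmidt ℝ f 1‖ ^ 2) ^ 2
      * ‖gramSchmidt ℝ f 2‖ ^ 2 := by
  simp [Pot3, Fin.prod_univ_three]

theorem Pot3_basis :
    Pot3 ![!₂[0, 3, -2], !₂[-3, -2, 0], !₂[2, -2, -2]] = 2496676 := by
  set b : Fin 3 → EuclideanSpace ℝ (Fin 3) := ![!₂[0, 3, -2], !₂[-3, -2, 0], !₂[2, -2, -2]]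
  have hb₁ : gramSchmidt ℝ b 1 = !₂[-3, -8 / 13, -12 / 13] := by
    simp only [gramSchmidt_one, b, Matrix.cons_val_zero, Matrix.cons_val_one,
      RCLike.ofReal_real_eq_id, id, real_inner_toLp_three, norm_sq_toLp_three, toLp_three_sub_smul]
    norm_num
  have hb₂ : gramSchmidt ℝ b 2 = !₂[8 / 7, -12 / 7, -18 / 7] := by
    simp only [gramSchmidt_two, hb₁, b, Matrix.cons_val_zero, Matrix.cons_val_two, Matrix.tail_cons,
      Matrix.head_cons, RCLike.ofReal_real_eq_id, id, real_inner_toLp_three, norm_sq_toLp_three,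
      toLp_three_sub_smul]
    norm_num
  simp only [Pot3_eq, gramSchmidt_fin_zero, hb₁, hb₂, b, Matrix.cons_val_zero, norm_sq_toLp_three]
  norm_num

theorem Pot3_deepInsertion :
    Pot3 ![!₂[2, -2, -2], !₂[0, 3, -2], !₂[-3, -2, 0]] = 2633856 := by
  set c : Fin 3 → EuclideanSpace ℝ (Fin 3) := ![!₂[2, -2, -2], !₂[0, 3, -2], !₂[-3, -2, 0]]
  have hc₁ : gramSchmidt ℝ c 1 = !₂[1 / 3, 8 / 3, -7 / 3] := by
    simp only [gramSchmidt_one, c, Matrix.cons_val_zero, Matrix.cons_val_one,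
      RCLike.ofReal_real_eq_id, id, real_inner_toLp_three, norm_sq_toLp_three, toLp_three_sub_smul]
    norm_num
  have hc₂ : gramSchmidt ℝ c 2 = !₂[-5 / 2, -1, -3 / 2] := by
    simp only [gramSchmidt_two, hc₁, c, Matrix.cons_val_zero, Matrix.cons_val_two, Matrix.tail_cons,
      Matrix.head_cons, RCLike.ofReal_real_eq_id, id, real_inner_toLp_three, norm_sq_toLp_three,
      toLp_three_sub_smul]
    norm_num
  simp only [Pot3_eq, gramSchmidt_fin_zero, hc₁, hc₂, c, Matrix.cons_val_zero, norm_sq_toLp_three]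
  norm_num

/-- Let `b` have columns `b₁ = (0, 3, −2)`, `b₂ = (−3, −2, 0)`,
`b₃ = (2, −2, −2)`, and let `σ_{1,3}(b) = (b₃, b₁, b₂)`. Then `Pot(b) = 2496676` and
`Pot(σ_{1,3}(b)) = 2633856`; in particular `Pot(σ_{1,3}(b)) > Pot(b)`, so `Pot` is not
monotonically decreasing under the deep insertion performed by `1`-DeepLLL on this
input. -/
theorem stmt_18 (b : Fin 3 → EuclideanSpace ℝ (Fin 3))
    (hb0 : b 0 = (WithLp.equiv 2 (Fin 3 → ℝ)).symm ![0, 3, -2])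
    (hb1 : b 1 = (WithLp.equiv 2 (Fin 3 → ℝ)).symm ![-3, -2, 0])
    (hb2 : b 2 = (WithLp.equiv 2 (Fin 3 → ℝ)).symm ![2, -2, -2]) :
    Pot3 b = 2496676 ∧ Pot3 ![b 2, b 0, b 1] = 2633856 ∧ Pot3 b < Pot3 ![b 2, b 0, b 1] := by
  have hb : b = ![!₂[0, 3, -2], !₂[-3, -2, 0], !₂[2, -2, -2]] := by
    ext1 i; fin_cases i <;> assumption
  have hσb : ![b 2, b 0, b 1] = ![!₂[2, -2, -2], !₂[0, 3, -2], !₂[-3, -2, 0]] := by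
    rw [hb0, hb1, hb2]; rfl
  rw [hσb, hb, Pot3_basis, Pot3_deepInsertion]
  norm_num
end
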